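/- arXiv:2308.12767 — 3 statements merged into one kernel-verified Lean document; each statement's English description precedes it below -/
import Mathlib

section
/- Fix d ≥ 1. Let X = (X_1,…,X_d) and Y = (Y_1,…,Y_d) be random vectors such that all 2d coordinate variables are mutually independent, with the X_i identically distributed with mean μ_X, variance σ_X², and third central moment E[(X_1−μ_X)³] = γ_X σ_X³, and the Y_i identically distributed with mean μ_Y, all relevant moments finite. Then Cov(s(X,X), s(X,Y)) = d·μ_Y·(γ_X σ_X³ + 2μ_X σ_X²), where s(x,y) = Σ_{i=1}^d x_i y_i. -/
open MeasureTheory ProbabilityTheory ENNReal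

/-- The covariance of two real random variables. -/
noncomputable def cov {Ω : Type*} [MeasurableSpace Ω] (X Y : Ω → ℝ) (μ : Measure Ω) : ℝ :=
  ∫ ω, (X ω - ∫ ω', X ω' ∂μ) * (Y ω - ∫ ω', Y ω' ∂μ) ∂μ

private lemma iIndepFun_ae_congr {ι Ω : Type*} {_mΩ : MeasurableSpace Ω} {μ : Measure Ω}
    {β : ι → Type*} [m : ∀ i, MeasurableSpace (β i)] {f g : ∀ i, Ω → β i}
    (hf : iIndepFun f μ) (h : ∀ i, f i =ᵐ[μ] g i) : iIndepFun g μ := by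
  rw [iIndepFun_iff_measure_inter_preimage_eq_mul] at hf ⊢
  intro S sets hsets
  have key : ∀ᵐ ω ∂μ, ∀ i ∈ S, f i ω = g i ω :=
    (ae_ball_iff S.countable_toSet).2 fun i _ => h i
  have h1 : (⋂ i ∈ S, g i ⁻¹' sets i : Set Ω) =ᵐ[μ] (⋂ i ∈ S, f i ⁻¹' sets i) := by
    filter_upwards [key] with ω hω
    show (ω ∈ ⋂ i ∈ S, g i ⁻¹' sets i) = (ω ∈ ⋂ i ∈ S, f i ⁻¹' sets i)
    simp only [Set.mem_iInter, Set.mem_preimage, eq_iff_iff]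
    exact forall₂_congr fun i hi => by rw [hω i hi]
  have h2 : ∀ i ∈ S, (g i ⁻¹' sets i : Set Ω) =ᵐ[μ] (f i ⁻¹' sets i) := by
    intro i hi
    filter_upwards [h i] with ω hω
    show (g i ω ∈ sets i) = (f i ω ∈ sets i)
    rw [hω]
  rw [measure_congr h1, hf S hsets]
  exact Finset.prod_congr rfl fun i hi => (measure_congr (h2 i hi)).symm

private lemma cov_eq_sub {Ω : Type*} [MeasurableSpace Ω] {μ : Measure Ω}
    [IsProbabilityMeasure μ] {A B : Ω → ℝ} (hA : Integrable A μ) (hB : Integrable B μ)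
    (hAB : Integrable (fun ω => A ω * B ω) μ) :
    cov A B μ = (∫ ω, A ω * B ω ∂μ) - (∫ ω, A ω ∂μ) * ∫ ω, B ω ∂μ := by
  unfold cov
  set a := ∫ ω, A ω ∂μ with ha
  set b := ∫ ω, B ω ∂μ with hb
  have h1 : ∀ ω, (A ω - a) * (B ω - b) = A ω * B ω - (a * B ω + (b * A ω - a * b)) :=
    fun ω => by ring
  simp_rw [h1]
  have h5 : Integrable (fun ω => b * A ω - a * b) μ :=
    (hA.const_mul b).sub (integrable_const (a * b))
  have h4 : Integrable (fun ω => a * B ω + (b * A ω - a * b)) μ :=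
    (hB.const_mul a).add h5
  rw [integral_sub hAB h4, integral_add (hB.const_mul a) h5,
    integral_sub (hA.const_mul b) (integrable_const (a * b)),
    integral_const_mul, integral_const_mul, integral_const]
  simp only [probReal_univ, measure_univ, ENNReal.toReal_one, one_smul, ← ha, ← hb]
  ring

/-- `Cov(s(X,X), s(X,Y)) = d·μY·(γX σX³ + 2μX σX²)` for
mutually independent coordinates. -/
theorem covariance_of_self_and_cross_inner_products
    {Ω : Type*} [MeasureSpace Ω] [IsProbabilityMeasure (ℙ : Measure Ω)]
    (d : ℕ) (hd : 1 ≤ d)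
    (X Y : Fin d → Ω → ℝ) (μX μY σX γX : ℝ)
    (h_indep : iIndepFun (Sum.elim X Y) ℙ)
    (hX_ident : ∀ i j, IdentDistrib (X i) (X j) ℙ ℙ)
    (hY_ident : ∀ i j, IdentDistrib (Y i) (Y j) ℙ ℙ)
    (hX4 : ∀ i, MemLp (X i) 4 ℙ) (hY2 : ∀ i, MemLp (Y i) 2 ℙ)
    (hXY2 : ∀ i, MemLp (fun ω => X i ω * Y i ω) 2 ℙ)
    (hEX : ∀ i, ∫ ω, X i ω ∂ℙ = μX) (hEY : ∀ i, ∫ ω, Y i ω ∂ℙ = μY)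
    (hVX : ∀ i, variance (X i) ℙ = σX ^ 2)
    (h_third : ∀ i, ∫ ω, (X i ω - μX) ^ 3 ∂ℙ = γX * σX ^ 3) :
    cov (fun ω => ∑ i, X i ω ^ 2) (fun ω => ∑ i, X i ω * Y i ω) ℙ
      = d * μY * (γX * σX ^ 3 + 2 * μX * σX ^ 2) := by
  classical
  set i0 : Fin d := ⟨0, hd⟩ with hi0
  -- integrability preliminaries
  have hX2 : ∀ i, MemLp (X i) 2 ℙ := fun i =>
    (hX4 i).mono_exponent (by norm_num)
  have hmul_mem : ∀ (f g : Ω → ℝ), MemLp f 2 ℙ → MemLp g 2 ℙ →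
      Integrable (fun ω => f ω * g ω) ℙ := by
    intro f g hf hg
    have h : MemLp (f • g) 1 ℙ := hg.smul hf (hpqr := ⟨by
      simp only [← one_div]
      rw [ENNReal.div_add_div_same,
        ENNReal.div_eq_div_iff (by norm_num) (by norm_num) (by norm_num) (by norm_num)]
      norm_num⟩)
    have he : (fun ω => f ω * g ω) = f • g := by funext ω; simp [smul_eq_mul]
    rw [he]
    exact memLp_one_iff_integrable.mp h
  have hXsq2 : ∀ i, MemLp (fun ω => X i ω ^ 2) 2 ℙ := by
    intro i
    have h : MemLp (X i • X i) 2 ℙ :=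
      (hX4 i).smul (hX4 i) (hpqr := ⟨by
          simp only [← one_div]
          rw [ENNReal.div_add_div_same,
            ENNReal.div_eq_div_iff (by norm_num) (by norm_num) (by norm_num) (by norm_num)]
          norm_num⟩)
    have he : (fun ω => X i ω ^ 2) = X i • X i := by funext ω; simp [pow_two, smul_eq_mul]
    rwa [he]
  have hIXsq : ∀ i, Integrable (fun ω => X i ω ^ 2) ℙ := fun i => (hX2 i).integrable_sq
  have hIXY : ∀ i, Integrable (fun ω => X i ω * Y i ω) ℙ := fun i =>
    memLp_one_iff_integrable.mp ((hXY2 i).mono_exponent one_le_two)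
  have hIterm : ∀ i j, Integrable (fun ω => X i ω ^ 2 * (X j ω * Y j ω)) ℙ := fun i j =>
    hmul_mem _ _ (hXsq2 i) (hXY2 j)
  have hS1 : Integrable (fun ω => ∑ i, X i ω ^ 2) ℙ :=
    integrable_finset_sum _ fun i _ => hIXsq i
  have hS2 : Integrable (fun ω => ∑ i, X i ω * Y i ω) ℙ :=
    integrable_finset_sum _ fun i _ => hIXY i
  have hrw : (fun ω => (∑ i, X i ω ^ 2) * ∑ j, X j ω * Y j ω)
      = fun ω => ∑ i, ∑ j, X i ω ^ 2 * (X j ω * Y j ω) := by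
    funext ω
    rw [Finset.sum_mul]
    exact Finset.sum_congr rfl fun i _ => Finset.mul_sum _ _ _
  have hS12 : Integrable (fun ω => (∑ i, X i ω ^ 2) * ∑ j, X j ω * Y j ω) ℙ := by
    rw [hrw]
    exact integrable_finset_sum _ fun i _ => integrable_finset_sum _ fun j _ => hIterm i j
  -- moments
  set m2 := ∫ ω, X i0 ω ^ 2 ∂ℙ with hm2def
  set m3 := ∫ ω, X i0 ω ^ 3 ∂ℙ with hm3def
  have hm2i : ∀ i, ∫ ω, X i ω ^ 2 ∂ℙ = m2 := fun i =>
    ((hX_ident i i0).comp (measurable_id.pow_const 2)).integral_eq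
  have hm3i : ∀ i, ∫ ω, X i ω ^ 3 ∂ℙ = m3 := fun i =>
    ((hX_ident i i0).comp (measurable_id.pow_const 3)).integral_eq
  have hES1 : ∫ ω, ∑ i, X i ω ^ 2 ∂ℙ = d * m2 := by
    rw [integral_finset_sum _ fun i _ => hIXsq i]
    simp [hm2i, Finset.sum_const, Finset.card_univ, nsmul_eq_mul]
  have hne : ∀ i j : Fin d, (Sum.inl i : Fin d ⊕ Fin d) ≠ Sum.inr j := fun i j => by simp
  have hXY_indep : ∀ i, IndepFun (X i) (Y i) ℙ := fun i => h_indep.indepFun (hne i i)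
  have hEXY : ∀ i, ∫ ω, X i ω * Y i ω ∂ℙ = μX * μY := by
    intro i
    have h := (hXY_indep i).integral_fun_mul_eq_mul_integral (hX4 i).1 (hY2 i).1
    rw [hEX i, hEY i] at h
    exact h
  have hES2 : ∫ ω, ∑ i, X i ω * Y i ω ∂ℙ = d * (μX * μY) := by
    rw [integral_finset_sum _ fun i _ => hIXY i]
    simp [hEXY, Finset.sum_const, Finset.card_univ, nsmul_eq_mul]
  -- diagonal terms
  have hdiag : ∀ i, ∫ ω, X i ω ^ 2 * (X i ω * Y i ω) ∂ℙ = m3 * μY := by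
    intro i
    have hind : IndepFun (fun ω => X i ω ^ 3) (Y i) ℙ :=
      (hXY_indep i).comp (measurable_id.pow_const 3) measurable_id
    have hX3m : AEStronglyMeasurable (fun ω => X i ω ^ 3) ℙ := (hX4 i).1.pow 3
    have h := hind.integral_fun_mul_eq_mul_integral hX3m (hY2 i).1
    calc ∫ ω, X i ω ^ 2 * (X i ω * Y i ω) ∂ℙ
        = ∫ ω, X i ω ^ 3 * Y i ω ∂ℙ :=
          integral_congr_ae (Filter.Eventually.of_forall fun ω => by ring)
      _ = (∫ ω, X i ω ^ 3 ∂ℙ) * ∫ ω, Y i ω ∂ℙ := h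
      _ = m3 * μY := by rw [hm3i i, hEY i]
  -- measurable modifications for the off-diagonal independence
  have hFm : ∀ k, AEMeasurable (Sum.elim X Y k) ℙ := by
    rintro (i | i)
    exacts [(hX4 i).1.aemeasurable, (hY2 i).1.aemeasurable]
  set G : (Fin d ⊕ Fin d) → Ω → ℝ := fun k => (hFm k).mk _ with hGdef
  have hGmeas : ∀ k, Measurable (G k) := fun k => (hFm k).measurable_mk
  have hFG : ∀ k, Sum.elim X Y k =ᵐ[ℙ] G k := fun k => (hFm k).ae_eq_mk
  have hGindep : iIndepFun G ℙ := iIndepFun_ae_congr h_indep hFG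
  have hoff : ∀ i j : Fin d, i ≠ j →
      ∫ ω, X i ω ^ 2 * (X j ω * Y j ω) ∂ℙ = m2 * (μX * μY) := by
    intro i j hij
    have h1 : IndepFun (fun ω => (G (.inl j) ω, G (.inr j) ω)) (G (.inl i)) ℙ :=
      hGindep.indepFun_prodMk hGmeas _ _ _
        (by simp [hij.symm]) (by simp)
    have h2 : IndepFun (fun ω => G (.inl j) ω * G (.inr j) ω)
        (fun ω => G (.inl i) ω ^ 2) ℙ :=
      h1.comp (measurable_fst.mul measurable_snd) (measurable_id.pow_const 2)
    have h3 : IndepFun (fun ω => X j ω * Y j ω) (fun ω => X i ω ^ 2) ℙ := by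
      refine h2.congr ?_ ?_
      · filter_upwards [hFG (.inl j), hFG (.inr j)] with ω e1 e2
        simp only [Sum.elim_inl, Sum.elim_inr] at e1 e2
        rw [← e1, ← e2]
      · filter_upwards [hFG (.inl i)] with ω e1
        simp only [Sum.elim_inl] at e1
        rw [← e1]
    have h := h3.symm.integral_fun_mul_eq_mul_integral (hXsq2 i).1 (hXY2 j).1
    rw [hm2i i, hEXY j] at h
    exact h
  -- the double sum
  have hval : ∀ i j : Fin d, ∫ ω, X i ω ^ 2 * (X j ω * Y j ω) ∂ℙ
      = m2 * (μX * μY) + if i = j then m3 * μY - m2 * (μX * μY) else 0 := by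
    intro i j
    by_cases h : i = j
    · subst h; simp [hdiag i]
    · simp [h, hoff i j h]
  have hsum : ∫ ω, (∑ i, X i ω ^ 2) * ∑ j, X j ω * Y j ω ∂ℙ
      = (d : ℝ) * (m3 * μY) + ((d : ℝ) ^ 2 - d) * (m2 * (μX * μY)) := by
    rw [hrw, integral_finset_sum _ fun i _ =>
      integrable_finset_sum _ fun j _ => hIterm i j]
    rw [Finset.sum_congr rfl fun i _ =>
      integral_finset_sum _ fun j _ => hIterm i j]
    rw [Finset.sum_congr rfl fun i (_ : i ∈ Finset.univ) =>
      Finset.sum_congr rfl fun j (_ : j ∈ Finset.univ) => hval i j]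
    simp only [Finset.sum_add_distrib, Finset.sum_const, Finset.card_univ, Fintype.card_fin,
      nsmul_eq_mul, Finset.sum_ite_eq, Finset.mem_univ, if_true]
    push_cast
    ring
  -- moment identities
  have hIX : Integrable (X i0) ℙ :=
    memLp_one_iff_integrable.mp ((hX2 i0).mono_exponent one_le_two)
  have hIX3 : Integrable (fun ω => X i0 ω ^ 3) ℙ := by
    have h := hmul_mem _ _ (hXsq2 i0) (hX2 i0)
    exact h.congr (Filter.Eventually.of_forall fun ω => by ring)
  have hm2eq : m2 = σX ^ 2 + μX ^ 2 := by
    have h := variance_eq_sub (hX2 i0)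
    rw [hVX i0, hEX i0] at h
    have hpow : (ℙ : Measure Ω)[(X i0) ^ 2] = m2 := by
      rw [hm2def]; exact integral_congr_ae (Filter.Eventually.of_forall fun ω => by simp)
    rw [hpow] at h
    linarith
  have hm3eq : m3 - m2 * μX = γX * σX ^ 3 + 2 * μX * σX ^ 2 := by
    have h2 : ∫ ω, (X i0 ω ^ 3 - 3 * μX * X i0 ω ^ 2 + 3 * μX ^ 2 * X i0 ω - μX ^ 3) ∂ℙ
        = γX * σX ^ 3 := by
      rw [← h_third i0]
      exact integral_congr_ae (Filter.Eventually.of_forall fun ω => by ring)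
    have hA1 : Integrable (fun ω => 3 * μX * X i0 ω ^ 2) ℙ := (hIXsq i0).const_mul _
    have hA2 : Integrable (fun ω => X i0 ω ^ 3 - 3 * μX * X i0 ω ^ 2) ℙ := hIX3.sub hA1
    have hA3 : Integrable (fun ω => 3 * μX ^ 2 * X i0 ω) ℙ := hIX.const_mul _
    have hA4 : Integrable
        (fun ω => X i0 ω ^ 3 - 3 * μX * X i0 ω ^ 2 + 3 * μX ^ 2 * X i0 ω) ℙ := hA2.add hA3
    rw [integral_sub hA4 (integrable_const (μX ^ 3)), integral_add hA2 hA3,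
      integral_sub hIX3 hA1,
      integral_const_mul, integral_const_mul, integral_const, hEX i0, hm2i i0] at h2
    simp only [probReal_univ, measure_univ, ENNReal.toReal_one, one_smul, ← hm3def] at h2
    linear_combination h2 + 2 * μX * hm2eq
  -- put everything together
  rw [cov_eq_sub hS1 hS2 hS12, hsum, hES1, hES2]
  linear_combination (d : ℝ) * μY * hm3eq
end

section
/- Under the stated setup, s_out = s(u_out, μ_𝒰) satisfies E[s_out] = d·μ² and Var(s_out) = d·(σ⁴ + (k+1)σ²μ²)/k. -/
open MeasureTheory ProbabilityTheory
open scoped ENNReal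

/-- Mutual independence is preserved under a.e. modification (countable index). -/
lemma iIndepFun_congr_ae' {Ω ι : Type*} [MeasurableSpace Ω] {μ : Measure Ω} [Countable ι]
    {β : ι → Type*} [m : ∀ i, MeasurableSpace (β i)] {f g : ∀ i, Ω → β i}
    (h : iIndepFun f μ) (hfg : ∀ i, f i =ᵐ[μ] g i) : iIndepFun g μ := by
  rw [iIndepFun_iff_measure_inter_preimage_eq_mul] at h ⊢
  intro S sets hsets
  have hae : ∀ᵐ ω ∂μ, ∀ i, f i ω = g i ω := ae_all_iff.2 hfg
  have hI : (⋂ i ∈ S, f i ⁻¹' sets i) =ᵐ[μ] (⋂ i ∈ S, g i ⁻¹' sets i) := by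
    rw [Filter.eventuallyEq_set]
    filter_upwards [hae] with ω hω
    simp only [Set.mem_iInter, Set.mem_preimage]
    exact forall_congr' fun i => forall_congr' fun _ => by rw [hω i]
  rw [← measure_congr hI, h S hsets]
  exact Finset.prod_congr rfl fun i _ =>
    measure_congr ((hfg i).fun_comp (· ∈ sets i))

/-- Variance is invariant under a.e. modification. -/
lemma variance_congr_ae' {Ω : Type*} [MeasurableSpace Ω] {μ : Measure Ω} {X Y : Ω → ℝ}
    (h : X =ᵐ[μ] Y) : variance X μ = variance Y μ := by
  have h1 : μ[X] = μ[Y] := integral_congr_ae h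
  unfold ProbabilityTheory.variance ProbabilityTheory.evariance
  rw [h1, lintegral_congr_ae (h.mono fun ω hω => by rw [hω])]

/-- The family of all `d(k+1)` coordinate random variables of the in-set
vectors `u_1, …, u_k` and of the out-of-set vector `u_out`. -/
def allCoords {Ω : Type*} {d k : ℕ} (u : Fin k → Fin d → Ω → ℝ)
    (uout : Fin d → Ω → ℝ) : (Fin k × Fin d) ⊕ Fin d → Ω → ℝ :=
  Sum.elim (fun p => u p.1 p.2) uout

/-- `s_out = s(u_out, μ_𝒰)` satisfies `E[s_out] = d·μ²` and
`Var(s_out) = d·(σ⁴ + (k+1)σ²μ²)/k`. -/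
theorem mean_and_variance_of_s_out
    {Ω : Type*} [MeasureSpace Ω] [IsProbabilityMeasure (ℙ : Measure Ω)]
    (d k : ℕ) (hd : 1 ≤ d) (hk : 2 ≤ k)
    (u : Fin k → Fin d → Ω → ℝ) (uout : Fin d → Ω → ℝ) (μ σ γ κ : ℝ)
    (h_indep : iIndepFun (allCoords u uout) ℙ)
    (h_ident : ∀ i j, IdentDistrib (allCoords u uout i) (allCoords u uout j) ℙ ℙ)
    (h_L4 : ∀ i, MemLp (allCoords u uout i) 4 ℙ)
    (h_mean : ∀ i, ∫ ω, allCoords u uout i ω ∂ℙ = μ)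
    (h_var : ∀ i, variance (allCoords u uout i) ℙ = σ ^ 2)
    (h_third : ∀ i, ∫ ω, (allCoords u uout i ω - μ) ^ 3 ∂ℙ = γ * σ ^ 3)
    (h_fourth : ∀ i, ∫ ω, (allCoords u uout i ω - μ) ^ 4 ∂ℙ = κ * σ ^ 4) :
    (∫ ω, (∑ l, uout l ω * ((1 / (k : ℝ)) * ∑ j, u j l ω)) ∂ℙ = d * μ ^ 2) ∧
    variance (fun ω => ∑ l, uout l ω * ((1 / (k : ℝ)) * ∑ j, u j l ω)) ℙ
      = d * (σ ^ 4 + (k + 1) * σ ^ 2 * μ ^ 2) / k := by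
  classical
  have hk0 : (k : ℝ) ≠ 0 := Nat.cast_ne_zero.2 (by omega)
  -- measurable modifications
  have hAm : ∀ i, AEMeasurable (allCoords u uout i) ℙ :=
    fun i => (h_L4 i).aestronglyMeasurable.aemeasurable
  set X : (Fin k × Fin d) ⊕ Fin d → Ω → ℝ := fun i => (hAm i).mk _ with hXdef
  have hXm : ∀ i, Measurable (X i) := fun i => (hAm i).measurable_mk
  have hXe : ∀ i, allCoords u uout i =ᵐ[ℙ] X i := fun i => (hAm i).ae_eq_mk
  have hXindep : iIndepFun X ℙ := iIndepFun_congr_ae' h_indep hXe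
  have hX4 : ∀ i, MemLp (X i) 4 ℙ := fun i => (h_L4 i).ae_eq (hXe i)
  have hX2 : ∀ i, MemLp (X i) 2 ℙ :=
    fun i => (hX4 i).mono_exponent (by norm_num)
  have hX1 : ∀ i, Integrable (X i) ℙ := fun i => (hX2 i).integrable one_le_two
  have hXmean : ∀ i, ∫ ω, X i ω ∂ℙ = μ := fun i => by
    rw [← integral_congr_ae (hXe i)]; exact h_mean i
  have hXvar : ∀ i, variance (X i) ℙ = σ ^ 2 := fun i => by
    rw [← variance_congr_ae' (hXe i)]; exact h_var i
  -- the blocks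
  set Y : Fin d → Ω → ℝ := fun l => X (Sum.inr l) with hYdef
  set V : Fin d → Ω → ℝ := fun l ω => (1 / (k : ℝ)) * ∑ j, X (Sum.inl (j, l)) ω with hVdef
  set W : Fin d → Ω → ℝ := fun l ω => Y l ω * V l ω with hWdef
  have hinj : ∀ l : Fin d, ∀ a ∈ (Finset.univ : Finset (Fin k)), ∀ b ∈ Finset.univ,
      (Sum.inl (a, l) : (Fin k × Fin d) ⊕ Fin d) = Sum.inl (b, l) → a = b :=
    fun l a _ b _ h => by simpa using h
  set s : Fin d → Finset ((Fin k × Fin d) ⊕ Fin d) :=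
    fun l => Finset.univ.image (fun j : Fin k => Sum.inl (j, l)) with hsdef
  have hsum : ∀ l, (∑ i ∈ s l, X i) = fun ω => ∑ j, X (Sum.inl (j, l)) ω := by
    intro l
    funext ω
    rw [Finset.sum_apply, hsdef]
    rw [Finset.sum_image (hinj l)]
  have hnotmem : ∀ l, (Sum.inr l : (Fin k × Fin d) ⊕ Fin d) ∉ s l := by
    intro l
    rw [hsdef]
    simp only [Finset.mem_image, Finset.mem_univ, true_and, not_exists]
    intro j h
    exact absurd h (by simp)
  -- independence of Y l and V l
  have hYV : ∀ l, IndepFun (Y l) (V l) ℙ := by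
    intro l
    have h1 : IndepFun (∑ i ∈ s l, X i) (X (Sum.inr l)) ℙ :=
      hXindep.indepFun_finset_sum_of_notMem hXm (hnotmem l)
    have h2 := h1.symm.comp measurable_id (measurable_const_mul (1 / (k : ℝ)))
    rw [hsum l] at h2
    exact h2
  -- Memℒp facts
  have hVsum4 : ∀ l, MemLp (fun ω => ∑ j, X (Sum.inl (j, l)) ω) 4 ℙ := by
    intro l
    rw [← hsum l]
    exact memLp_finset_sum' _ fun j _ => hX4 _
  have hV4 : ∀ l, MemLp (V l) 4 ℙ := fun l => (hVsum4 l).const_mul _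
  have hV2 : ∀ l, MemLp (V l) 2 ℙ :=
    fun l => (hV4 l).mono_exponent (by norm_num)
  have hVint : ∀ l, Integrable (V l) ℙ := fun l => (hV2 l).integrable one_le_two
  have hW2 : ∀ l, MemLp (W l) 2 ℙ := by
    intro l
    exact (hV4 l).smul (φ := Y l) (hX4 _) (r := 2) (hpqr := ⟨by
      rw [← two_mul, show (4:ℝ≥0∞) = 2*2 by norm_num, ENNReal.mul_inv (by simp) (by simp),
        ← mul_assoc, ENNReal.mul_inv_cancel (by simp) (by simp), one_mul]⟩)
  -- means
  have hEY : ∀ l, ∫ ω, Y l ω ∂ℙ = μ := fun l => hXmean _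
  have hEV : ∀ l, ∫ ω, V l ω ∂ℙ = μ := by
    intro l
    rw [hVdef]
    simp only
    rw [integral_const_mul, integral_finset_sum _ fun j _ => hX1 _]
    simp only [hXmean]
    rw [Finset.sum_const, Finset.card_univ, Fintype.card_fin, nsmul_eq_mul]
    field_simp
  -- variance of V
  have hVarV : ∀ l, variance (V l) ℙ = σ ^ 2 / k := by
    intro l
    have hvz : variance (fun ω => ∑ j, X (Sum.inl (j, l)) ω) ℙ = k * σ ^ 2 := by
      rw [← hsum l]
      rw [IndepFun.variance_sum (fun i _ => hX2 _)
        (fun i hi j hj hij => hXindep.indepFun hij)]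
      rw [hsdef]
      rw [Finset.sum_image (hinj l)]
      simp [hXvar, Finset.sum_const, mul_comm]
    have hm := variance_const_mul (1 / (k : ℝ)) (fun ω => ∑ j, X (Sum.inl (j, l)) ω) ℙ
    rw [hVdef]
    rw [hm, hvz]
    field_simp
  -- second moments
  have hEY2 : ∀ l, ∫ ω, Y l ω ^ 2 ∂ℙ = σ ^ 2 + μ ^ 2 := by
    intro l
    have h1 := variance_eq_sub (hX2 (Sum.inr l))
    rw [hXvar, hXmean] at h1
    have h2 : (ℙ : Measure Ω)[(X (Sum.inr l)) ^ 2] = ∫ ω, Y l ω ^ 2 ∂ℙ := by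
      apply integral_congr_ae; filter_upwards with ω; simp [hYdef]
    rw [h2] at h1
    linarith
  have hEV2 : ∀ l, ∫ ω, V l ω ^ 2 ∂ℙ = σ ^ 2 / k + μ ^ 2 := by
    intro l
    have h1 := variance_eq_sub (hV2 l)
    rw [hVarV l, hEV l] at h1
    have h2 : (ℙ : Measure Ω)[(V l) ^ 2] = ∫ ω, V l ω ^ 2 ∂ℙ := by
      apply integral_congr_ae; filter_upwards with ω; simp
    rw [h2] at h1
    linarith
  -- first and second moments of W
  have hEW : ∀ l, ∫ ω, W l ω ∂ℙ = μ ^ 2 := by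
    intro l
    have h1 : ∫ ω, (Y l * V l) ω ∂ℙ = (∫ ω, Y l ω ∂ℙ) * ∫ ω, V l ω ∂ℙ :=
      (hYV l).integral_mul_eq_mul_integral (hX1 _).aestronglyMeasurable (hVint l).aestronglyMeasurable
    rw [hEY, hEV] at h1
    rw [show (∫ ω, W l ω ∂ℙ) = ∫ ω, (Y l * V l) ω ∂ℙ from rfl, h1]
    ring
  have hEW2 : ∀ l, ∫ ω, W l ω ^ 2 ∂ℙ
      = (σ ^ 2 + μ ^ 2) * (σ ^ 2 / k + μ ^ 2) := by
    intro l
    have hsq : Measurable fun x : ℝ => x ^ 2 := measurable_id.pow_const 2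
    have hind2 : IndepFun (fun ω => Y l ω ^ 2) (fun ω => V l ω ^ 2) ℙ :=
      (hYV l).comp hsq hsq
    have h1 : ∫ ω, ((fun ω => Y l ω ^ 2) * fun ω => V l ω ^ 2) ω ∂ℙ
        = (∫ ω, Y l ω ^ 2 ∂ℙ) * ∫ ω, V l ω ^ 2 ∂ℙ :=
      hind2.integral_mul_eq_mul_integral (hX2 _).integrable_sq.aestronglyMeasurable
          (hV2 l).integrable_sq.aestronglyMeasurable
    have h2 : ∫ ω, W l ω ^ 2 ∂ℙ
        = ∫ ω, ((fun ω => Y l ω ^ 2) * fun ω => V l ω ^ 2) ω ∂ℙ := by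
      apply integral_congr_ae; filter_upwards with ω
      simp [hWdef, mul_pow]
    rw [h2, h1, hEY2, hEV2]
  have hVarW : ∀ l, variance (W l) ℙ
      = (σ ^ 2 + μ ^ 2) * (σ ^ 2 / k + μ ^ 2) - μ ^ 4 := by
    intro l
    have h1 := variance_eq_sub (hW2 l)
    have h2 : (ℙ : Measure Ω)[(W l) ^ 2] = ∫ ω, W l ω ^ 2 ∂ℙ := by
      apply integral_congr_ae; filter_upwards with ω; simp
    rw [h2, hEW2, hEW] at h1
    rw [h1]; ring
  -- pairwise independence of the W l
  have hWindep : ∀ l l' : Fin d, l ≠ l' → IndepFun (W l) (W l') ℙ := by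
    intro l l' hll
    set T : Fin d → Finset ((Fin k × Fin d) ⊕ Fin d) :=
      fun l => insert (Sum.inr l) (s l) with hTdef
    have hmemr : ∀ l, (Sum.inr l : (Fin k × Fin d) ⊕ Fin d) ∈ T l :=
      fun l => Finset.mem_insert_self _ _
    have hmeml : ∀ l (j : Fin k), (Sum.inl (j, l) : (Fin k × Fin d) ⊕ Fin d) ∈ T l :=
      fun l j => Finset.mem_insert_of_mem (by
        rw [hsdef]; exact Finset.mem_image_of_mem _ (Finset.mem_univ j))
    set g : ∀ l : Fin d, ((i : T l) → ℝ) → ℝ :=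
      fun l v => v ⟨Sum.inr l, hmemr l⟩
        * ((1 / (k : ℝ)) * ∑ j, v ⟨Sum.inl (j, l), hmeml l j⟩) with hgdef
    have hgm : ∀ l, Measurable (g l) := by
      intro l
      rw [hgdef]
      fun_prop
    have hdisj : Disjoint (T l) (T l') := by
      rw [Finset.disjoint_left]
      intro x hx hx'
      rw [hTdef, hsdef] at hx hx'
      simp only [Finset.mem_insert, Finset.mem_image, Finset.mem_univ, true_and] at hx hx'
      rcases hx with rfl | ⟨a, rfl⟩
      · rcases hx' with h' | ⟨b, hb⟩
        · exact hll (Sum.inr.inj h')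
        · exact Sum.inl_ne_inr hb
      · rcases hx' with h' | ⟨b, hb⟩
        · exact Sum.inl_ne_inr h'
        · exact hll (congrArg Prod.snd (Sum.inl.inj hb)).symm
    have h1 := (hXindep.indepFun_finset (T l) (T l') hdisj hXm).comp (hgm l) (hgm l')
    exact h1
  -- the sum of the W l
  have hae : ∀ᵐ ω ∂ℙ, ∀ i, allCoords u uout i ω = X i ω := ae_all_iff.2 hXe
  have hsae : (fun ω => ∑ l, uout l ω * ((1 / (k : ℝ)) * ∑ j, u j l ω))
      =ᵐ[ℙ] fun ω => ∑ l, W l ω := by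
    filter_upwards [hae] with ω hω
    refine Finset.sum_congr rfl fun l _ => ?_
    have h1 : uout l ω = Y l ω := hω (Sum.inr l)
    have h2 : ∀ j, u j l ω = X (Sum.inl (j, l)) ω := fun j => hω (Sum.inl (j, l))
    rw [h1]
    congr 1
    rw [hVdef]
    exact congrArg _ (Finset.sum_congr rfl fun j _ => h2 j)
  have hWint : ∀ l, Integrable (W l) ℙ := fun l => (hW2 l).integrable one_le_two
  constructor
  · rw [integral_congr_ae hsae, integral_finset_sum _ fun l _ => hWint l]
    simp only [hEW, Finset.sum_const, Finset.card_univ, Fintype.card_fin, nsmul_eq_mul]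
  · have hv1 : variance (fun ω => ∑ l, uout l ω * ((1 / (k : ℝ)) * ∑ j, u j l ω)) ℙ
        = variance (∑ l, W l) ℙ := by
      refine variance_congr_ae' (hsae.trans ?_)
      filter_upwards with ω
      rw [Finset.sum_apply]
    rw [hv1, IndepFun.variance_sum (fun l _ => hW2 l)
      (fun l _ l' _ hll => hWindep l l' hll)]
    simp only [hVarW, Finset.sum_const, Finset.card_univ, Fintype.card_fin, nsmul_eq_mul]
    have harith : (σ ^ 2 + μ ^ 2) * (σ ^ 2 / (k : ℝ) + μ ^ 2) - μ ^ 4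
        = (σ ^ 4 + ((k : ℝ) + 1) * σ ^ 2 * μ ^ 2) / k := by
      field_simp
      ring
    rw [harith]
    ring
end

section
/- Let N > k ≥ 1 be integers with N − k ≥ k. Let A_1,…,A_k and B_1,…,B_{N−k} be mutually independent real random variables, the A_j i.i.d. with an atomless distribution and the B_j i.i.d. with an atomless distribution. Let Prec = (1/k)·|{j : A_j is among the k largest of the N values A_1,…,A_k,B_1,…,B_{N−k}}|. Then E[Prec] = (1/k)·Σ_{i=1}^{k} P(A_{(i)} > B_{(k−i+1)}), where A_{(i)} denotes the i-th largest value among A_1,…,A_k and B_{(j)} the j-th largest value among B_1,…,B_{N−k}. -/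
open MeasureTheory ProbabilityTheory

/-- The `j`-th largest element (1-indexed) of a finite multiset of reals. -/
noncomputable def nthLargestM (s : Multiset ℝ) (j : ℕ) : ℝ :=
  (s.sort (· ≤ ·)).getD (Multiset.card s - j) 0


lemma key_list (p : ℝ → Prop) [DecidablePred p] (hp : ∀ x y, x ≤ y → p x → p y) :
    ∀ (l : List ℝ), l.Pairwise (· ≤ ·) → ∀ j, 1 ≤ j → j ≤ l.length →
      (p (l.getD (l.length - j) 0) ↔ j ≤ l.countP p) := by
  intro l
  induction l with
  | nil => intro _ j h1 h2; simp at h2; omega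
  | cons x l ih =>
    intro hs j hj1 hj2
    rw [List.pairwise_cons] at hs
    obtain ⟨hx, hl⟩ := hs
    by_cases hpx : p x
    · have hall : ∀ y ∈ x :: l, p y := by
        intro y hy
        rcases List.mem_cons.1 hy with h | h
        · exact h ▸ hpx
        · exact hp x y (hx y h) hpx
      have hcount : (x :: l).countP (fun a => decide (p a)) = (x :: l).length := by
        rw [List.countP_eq_length]
        intro a ha; exact decide_eq_true (hall a ha)
      constructor
      · intro _; rw [hcount]; exact hj2
      · intro _
        have hlt : (x :: l).length - j < (x :: l).length := by
          simp only [List.length_cons]; omega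
        rw [List.getD_eq_getElem _ _ hlt]
        exact hall _ (List.getElem_mem hlt)
    · have hc : (x :: l).countP (fun a => decide (p a)) = l.countP (fun a => decide (p a)) := by
        rw [List.countP_cons_of_neg]
        simp [hpx]
      rcases Nat.lt_or_ge j (l.length + 1) with h | h
      · have hidx : (x :: l).length - j = (l.length - j) + 1 := by
          simp only [List.length_cons]; omega
        rw [hidx, List.getD_cons_succ, hc]
        exact ih hl j hj1 (by omega)
      · have hj : j = l.length + 1 := by simp only [List.length_cons] at hj2; omega
        subst hj
        have hidx : (x :: l).length - (l.length + 1) = 0 := by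
          simp only [List.length_cons]; omega
        rw [hidx, List.getD_cons_zero, hc]
        constructor
        · intro h'; exact absurd h' hpx
        · intro h'
          have := l.countP_le_length (p := fun a => decide (p a))
          omega

lemma key_multiset (p : ℝ → Prop) [DecidablePred p] (hp : ∀ x y, x ≤ y → p x → p y)
    (s : Multiset ℝ) (j : ℕ) (hj1 : 1 ≤ j) (hj2 : j ≤ Multiset.card s) :
    p (nthLargestM s j) ↔ j ≤ Multiset.card (s.filter p) := by
  have hsort : (s.sort (· ≤ ·)).Pairwise (· ≤ ·) := Multiset.pairwise_sort _ _
  have hlen : (s.sort (· ≤ ·)).length = Multiset.card s := Multiset.length_sort _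
  have hcnt : Multiset.card (s.filter p) = (s.sort (· ≤ ·)).countP (fun a => decide (p a)) := by
    rw [← Multiset.countP_eq_card_filter]
    conv_lhs => rw [← Multiset.sort_eq s (· ≤ ·)]
    rw [Multiset.coe_countP]
  rw [nthLargestM, hcnt, ← hlen]
  exact key_list p hp _ hsort j hj1 (by omega)

lemma nthLargestM_mem (s : Multiset ℝ) (j : ℕ) (hj1 : 1 ≤ j) (hj2 : j ≤ Multiset.card s) :
    nthLargestM s j ∈ s := by
  have hlen : (s.sort (· ≤ ·)).length = Multiset.card s := Multiset.length_sort _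
  have hlt : Multiset.card s - j < (s.sort (· ≤ ·)).length := by omega
  rw [nthLargestM, List.getD_eq_getElem _ _ hlt]
  rw [← Multiset.mem_sort (· ≤ ·)]
  exact List.getElem_mem hlt

lemma nth_le_iff (s : Multiset ℝ) (t : ℝ) (j : ℕ) (hj1 : 1 ≤ j) (hj2 : j ≤ Multiset.card s) :
    t ≤ nthLargestM s j ↔ j ≤ Multiset.card (s.filter (fun x => t ≤ x)) :=
  key_multiset _ (fun x y hxy h => le_trans h hxy) s j hj1 hj2

lemma nth_lt_iff (s : Multiset ℝ) (t : ℝ) (j : ℕ) (hj1 : 1 ≤ j) (hj2 : j ≤ Multiset.card s) :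
    t < nthLargestM s j ↔ j ≤ Multiset.card (s.filter (fun x => t < x)) :=
  key_multiset _ (fun x y hxy h => lt_of_lt_of_le h hxy) s j hj1 hj2

lemma card_filter_le_of_nodup (s : Multiset ℝ) (hs : s.Nodup) (t : ℝ) (ht : t ∈ s) :
    Multiset.card (s.filter (fun x => t ≤ x))
      = Multiset.card (s.filter (fun x => t < x)) + 1 := by
  have h1 : s.filter (fun x => t < x) + s.filter (fun x => x = t)
      = s.filter (fun x => t < x ∨ x = t) + s.filter (fun x => t < x ∧ x = t) :=
    Multiset.filter_add_filter _ _ s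
  have h2 : s.filter (fun x => t < x ∧ x = t) = 0 := by
    rw [Multiset.filter_eq_nil]
    rintro a _ ⟨h, rfl⟩; exact lt_irrefl _ h
  have h3 : s.filter (fun x => t < x ∨ x = t) = s.filter (fun x => t ≤ x) := by
    apply Multiset.filter_congr
    intro x _
    constructor
    · rintro (h | h)
      · exact le_of_lt h
      · exact h.symm.le
    · intro h; rcases lt_or_eq_of_le h with h | h
      · exact Or.inl h
      · exact Or.inr h.symm
  have h4 : Multiset.card (s.filter (fun x => x = t)) = 1 := by
    have : s.filter (fun x => x = t) = s.filter (t = ·) := by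
      apply Multiset.filter_congr; intro x _; exact eq_comm
    rw [this, ← Multiset.count_eq_card_filter_eq]
    exact Multiset.count_eq_one_of_mem hs ht
  have := congrArg Multiset.card h1
  simp only [Multiset.card_add, h2, h3, Multiset.card_zero, add_zero] at this
  omega

lemma det_main (k nb : ℕ) (hk : 1 ≤ k) (hknb : k ≤ nb) (ma mb : Multiset ℝ)
    (hca : Multiset.card ma = k) (hcb : Multiset.card mb = nb)
    (hnd : (ma + mb).Nodup) (i : ℕ) (hi1 : 1 ≤ i) (hi2 : i ≤ k) :
    nthLargestM mb (k - i + 1) < nthLargestM ma i ↔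
      i ≤ Multiset.card (ma.filter (fun x => nthLargestM (ma + mb) k ≤ x)) := by
  set s := ma + mb with hs
  set T := nthLargestM s k with hT
  set m := Multiset.card (ma.filter (fun x => T ≤ x)) with hm
  have hcs : Multiset.card s = k + nb := by rw [hs, Multiset.card_add, hca, hcb]
  have hks : k ≤ Multiset.card s := by omega
  have hTmem : T ∈ s := nthLargestM_mem s k hk hks
  have hge : k ≤ Multiset.card (s.filter (fun x => T ≤ x)) :=
    (nth_le_iff s T k hk hks).1 (le_refl T)
  have hlt : Multiset.card (s.filter (fun x => T < x)) < k := by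
    by_contra h
    exact lt_irrefl T ((nth_lt_iff s T k hk hks).2 (by omega))
  have hsplit := card_filter_le_of_nodup s hnd T hTmem
  have hcT : Multiset.card (s.filter (fun x => T ≤ x)) = k := by omega
  have hadd : Multiset.card (s.filter (fun x => T ≤ x))
      = m + Multiset.card (mb.filter (fun x => T ≤ x)) := by
    rw [hs, Multiset.filter_add, Multiset.card_add]
  have hmk : m ≤ k := by omega
  have hcB : Multiset.card (mb.filter (fun x => T ≤ x)) = k - m := by omega
  have hib1 : 1 ≤ k - i + 1 := by omega
  have hib2 : k - i + 1 ≤ Multiset.card mb := by omega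
  constructor
  · intro hlt'
    by_contra hcon
    push_neg at hcon
    have h1 : T ≤ nthLargestM mb (k - i + 1) := by
      rw [nth_le_iff mb T _ hib1 hib2, hcB]
      omega
    have h2 : nthLargestM ma i < T := by
      by_contra h
      push_neg at h
      have := (nth_le_iff ma T i hi1 (by omega)).1 h
      rw [← hm] at this
      omega
    exact absurd (lt_of_lt_of_le h2 h1) (not_lt.2 (le_of_lt hlt'))
  · intro him
    have h1 : T ≤ nthLargestM ma i := by
      rw [nth_le_iff ma T i hi1 (by omega), ← hm]
      omega
    have h2 : nthLargestM mb (k - i + 1) < T := by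
      by_contra h
      push_neg at h
      have := (nth_le_iff mb T _ hib1 hib2).1 h
      rw [hcB] at this
      omega
    exact lt_of_lt_of_le h2 h1

lemma card_filter_map_eq (n : ℕ) (f : Fin n → ℝ) (p : ℝ → Prop) [DecidablePred p] :
    Multiset.card ((Multiset.map f Finset.univ.val).filter p)
      = (Finset.univ.filter (fun j => p (f j))).card := by
  rw [← Multiset.countP_eq_card_filter, Multiset.countP_map]
  rfl

lemma measurable_nth {Ω : Type*} [MeasurableSpace Ω] (n : ℕ) (f : Fin n → Ω → ℝ)
    (hf : ∀ j, Measurable (f j)) (i : ℕ) (hi1 : 1 ≤ i) (hi2 : i ≤ n) :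
    Measurable (fun ω => nthLargestM (Multiset.map (fun j => f j ω) Finset.univ.val) i) := by
  apply measurable_of_Ioi
  intro t
  have hcard : ∀ ω : Ω, Multiset.card (Multiset.map (fun j => f j ω) Finset.univ.val) = n := by
    intro ω; rw [Multiset.card_map]; simp
  have hset : (fun ω => nthLargestM (Multiset.map (fun j => f j ω) Finset.univ.val) i) ⁻¹' Set.Ioi t
      = {ω | i ≤ (Finset.univ.filter (fun j => t < f j ω)).card} := by
    ext ω
    simp only [Set.mem_preimage, Set.mem_Ioi, Set.mem_setOf_eq]
    rw [nth_lt_iff _ t i hi1 (by rw [hcard]; exact hi2)]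
    rw [card_filter_map_eq]
  rw [hset]
  have hF : Measurable (fun ω => (Finset.univ.filter (fun j => t < f j ω)).card) := by
    have : (fun ω => (Finset.univ.filter (fun j => t < f j ω)).card)
        = fun ω => ∑ j : Fin n, if t < f j ω then 1 else 0 := by
      funext ω; rw [Finset.card_filter]
    rw [this]
    apply Finset.measurable_sum
    intro j _
    exact Measurable.ite (measurableSet_lt measurable_const (hf j)) measurable_const measurable_const
  exact hF measurableSet_Ici

open MeasureTheory ProbabilityTheory

lemma indep_eq_null {Ω : Type*} [MeasureSpace Ω] [IsProbabilityMeasure (ℙ : Measure Ω)]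
    (X Y : Ω → ℝ) (hX : Measurable X) (hY : Measurable Y) (h : IndepFun X Y ℙ)
    (hY0 : ∀ x : ℝ, (ℙ : Measure Ω) {ω | Y ω = x} = 0) :
    (ℙ : Measure Ω) {ω | X ω = Y ω} = 0 := by
  have hmap : (ℙ : Measure Ω).map (fun ω => (X ω, Y ω))
      = ((ℙ : Measure Ω).map X).prod ((ℙ : Measure Ω).map Y) :=
    (indepFun_iff_map_prod_eq_prod_map_map hX.aemeasurable hY.aemeasurable).1 h
  have hdiag : MeasurableSet {p : ℝ × ℝ | p.1 = p.2} :=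
    measurableSet_eq_fun measurable_fst measurable_snd
  have h1 : (ℙ : Measure Ω) {ω | X ω = Y ω}
      = ((ℙ : Measure Ω).map (fun ω => (X ω, Y ω))) {p : ℝ × ℝ | p.1 = p.2} := by
    rw [Measure.map_apply (hX.prodMk hY) hdiag]
    rfl
  rw [h1, hmap, Measure.prod_apply hdiag]
  have : ∀ x : ℝ, ((ℙ : Measure Ω).map Y) (Prod.mk x ⁻¹' {p : ℝ × ℝ | p.1 = p.2}) = 0 := by
    intro x
    have : Prod.mk x ⁻¹' {p : ℝ × ℝ | p.1 = p.2} = {x} := by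
      ext y; simp [eq_comm]
    rw [this, Measure.map_apply hY (measurableSet_singleton x)]
    have : Y ⁻¹' {x} = {ω | Y ω = x} := rfl
    rw [this]; exact hY0 x
  simp only [this]
  simp

/-- The expected precision equals
`(1/k)·Σ_{i=1}^{k} P(A_{(i)} > B_{(k−i+1)})`, where `A_{(i)}` and `B_{(j)}` are
descending order statistics and the precision counts how many of the `A_j` are
among the `k` largest of all `N` values. -/
theorem expected_precision_eq_sum_of_order_statistic_probs
    {Ω : Type*} [MeasureSpace Ω] [IsProbabilityMeasure (ℙ : Measure Ω)]
    (N k : ℕ) (hk : 1 ≤ k) (hkN : k < N) (hNk : k ≤ N - k)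
    (A : Fin k → Ω → ℝ) (B : Fin (N - k) → Ω → ℝ)
    (hAmeas : ∀ j, Measurable (A j)) (hBmeas : ∀ j, Measurable (B j))
    (h_indep : iIndepFun (Sum.elim A B) ℙ)
    (hA_ident : ∀ j j', IdentDistrib (A j) (A j') ℙ ℙ)
    (hB_ident : ∀ j j', IdentDistrib (B j) (B j') ℙ ℙ)
    (hA_atomless : ∀ j (x : ℝ), ℙ {ω | A j ω = x} = 0)
    (hB_atomless : ∀ j (x : ℝ), ℙ {ω | B j ω = x} = 0) :
    ∫ ω, ((Finset.univ.filter (fun j : Fin k =>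
          nthLargestM ((Multiset.map (fun j' => A j' ω) Finset.univ.val)
            + (Multiset.map (fun j' => B j' ω) Finset.univ.val)) k ≤ A j ω)).card : ℝ)
        / k ∂ℙ
      = (1 / (k : ℝ)) * ∑ i ∈ Finset.Icc 1 k,
          (ℙ {ω | nthLargestM (Multiset.map (fun j' => B j' ω) Finset.univ.val) (k - i + 1)
              < nthLargestM (Multiset.map (fun j' => A j' ω) Finset.univ.val) i}).toReal := by
  classical
  have hXmeas : ∀ p, Measurable (Sum.elim A B p) := by
    rintro (j | j)
    · exact hAmeas j
    · exact hBmeas j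
  have hXatom : ∀ p (x : ℝ), (ℙ : Measure Ω) {ω | Sum.elim A B p ω = x} = 0 := by
    rintro (j | j) x
    · exact hA_atomless j x
    · exact hB_atomless j x
  have hpair : ∀ p q, p ≠ q → (ℙ : Measure Ω) {ω | Sum.elim A B p ω = Sum.elim A B q ω} = 0 :=
    fun p q hpq =>
      indep_eq_null _ _ (hXmeas p) (hXmeas q) (h_indep.indepFun hpq) (hXatom q)
  have hae : ∀ᵐ ω ∂(ℙ : Measure Ω), ∀ p q, p ≠ q → Sum.elim A B p ω ≠ Sum.elim A B q ω := by
    rw [ae_all_iff]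
    intro p
    rw [ae_all_iff]
    intro q
    by_cases hpq : p = q
    · filter_upwards with ω h
      exact absurd hpq h
    · rw [ae_iff]
      refine measure_mono_null ?_ (hpair p q hpq)
      intro ω hω
      simp only [Set.mem_setOf_eq] at hω ⊢
      push_neg at hω
      exact hω.2
  have haeN : ∀ᵐ ω ∂(ℙ : Measure Ω),
      ((Multiset.map (fun j' => A j' ω) Finset.univ.val)
        + (Multiset.map (fun j' => B j' ω) Finset.univ.val)).Nodup := by
    filter_upwards [hae] with ω h
    rw [Multiset.nodup_add]
    refine ⟨?_, ?_, ?_⟩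
    · refine Multiset.Nodup.map_on ?_ Finset.univ.nodup
      intro j _ j' _ hEq
      by_contra hne
      exact h (Sum.inl j) (Sum.inl j') (by simp [hne]) hEq
    · refine Multiset.Nodup.map_on ?_ Finset.univ.nodup
      intro j _ j' _ hEq
      by_contra hne
      exact h (Sum.inr j) (Sum.inr j') (by simp [hne]) hEq
    · rw [Multiset.disjoint_left]
      intro a ha hb
      rw [Multiset.mem_map] at ha hb
      obtain ⟨j, _, hj⟩ := ha
      obtain ⟨j', _, hj'⟩ := hb
      exact h (Sum.inl j) (Sum.inr j') (by simp) (hj.trans hj'.symm)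
  set E : ℕ → Set Ω := fun i =>
    {ω | nthLargestM (Multiset.map (fun j' => B j' ω) Finset.univ.val) (k - i + 1)
        < nthLargestM (Multiset.map (fun j' => A j' ω) Finset.univ.val) i} with hE
  have hEmeas : ∀ i ∈ Finset.Icc 1 k, MeasurableSet (E i) := by
    intro i hi
    rw [Finset.mem_Icc] at hi
    exact measurableSet_lt
      (measurable_nth (N - k) B hBmeas (k - i + 1) (by omega) (by omega))
      (measurable_nth k A hAmeas i hi.1 hi.2)
  have hptwise : ∀ᵐ ω ∂(ℙ : Measure Ω),
      ((Finset.univ.filter (fun j : Fin k =>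
          nthLargestM ((Multiset.map (fun j' => A j' ω) Finset.univ.val)
            + (Multiset.map (fun j' => B j' ω) Finset.univ.val)) k ≤ A j ω)).card : ℝ)
        = ∑ i ∈ Finset.Icc 1 k, (E i).indicator (fun _ => (1 : ℝ)) ω := by
    filter_upwards [haeN] with ω hnd
    set ma := Multiset.map (fun j' => A j' ω) Finset.univ.val with hma
    set mb := Multiset.map (fun j' => B j' ω) Finset.univ.val with hmb
    have hca : Multiset.card ma = k := by simp [hma]
    have hcb : Multiset.card mb = N - k := by simp [hmb]
    set m := Multiset.card (ma.filter (fun x => nthLargestM (ma + mb) k ≤ x)) with hmdef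
    have hmk : m ≤ k := le_trans (Multiset.card_le_card (Multiset.filter_le _ _)) (le_of_eq hca)
    have hdet : ∀ i, 1 ≤ i → i ≤ k → (ω ∈ E i ↔ i ≤ m) := by
      intro i hi1 hi2
      exact det_main k (N - k) hk hNk ma mb hca hcb hnd i hi1 hi2
    have hcard : (Finset.univ.filter (fun j : Fin k =>
        nthLargestM (ma + mb) k ≤ A j ω)).card = m := by
      rw [hmdef, card_filter_map_eq]
    rw [hcard]
    have hind : ∀ i ∈ Finset.Icc 1 k,
        (E i).indicator (fun _ => (1 : ℝ)) ω = if i ≤ m then 1 else 0 := by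
      intro i hi
      rw [Finset.mem_Icc] at hi
      rw [Set.indicator_apply]
      exact if_congr (hdet i hi.1 hi.2) rfl rfl
    rw [Finset.sum_congr rfl hind, Finset.sum_boole]
    have : (Finset.Icc 1 k).filter (fun i => i ≤ m) = Finset.Icc 1 m := by
      ext x
      simp only [Finset.mem_filter, Finset.mem_Icc]
      omega
    rw [this, Nat.card_Icc]
    simp
  have hint : ∀ i ∈ Finset.Icc 1 k,
      Integrable ((E i).indicator (fun _ => (1 : ℝ))) (ℙ : Measure Ω) :=
    fun i hi => (integrable_const (1 : ℝ)).indicator (hEmeas i hi)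
  rw [MeasureTheory.integral_div, integral_congr_ae hptwise,
    integral_finset_sum _ hint]
  have : ∀ i ∈ Finset.Icc 1 k,
      ∫ ω, (E i).indicator (fun _ => (1 : ℝ)) ω ∂(ℙ : Measure Ω)
        = ((ℙ : Measure Ω) (E i)).toReal := by
    intro i hi
    rw [integral_indicator_const (1 : ℝ) (hEmeas i hi)]
    simp [Measure.real]
  rw [Finset.sum_congr rfl this, div_eq_mul_inv, mul_comm, ← one_div]
end
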